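/- arXiv:2102.05088 — 3 statements merged into one kernel-verified Lean document; each statement's English description precedes it below -/
import Mathlib

section
/- Let N ≥ 3, let x_1, …, x_N be pairwise distinct real numbers, let ℓ_j be the Lagrange basis polynomials, and write c^{(m)}_{ij} = ℓ_j^{(m)}(x_i). Then for all 2 ≤ m ≤ N − 1 and all indices i ≠ j, the Shu recurrence holds: c^{(m)}_{ij} = m · ( c^{(m−1)}_{ii} · c^{(1)}_{ij} − c^{(m−1)}_{ij} / (x_i − x_j) ). -/
/-!
Write `ω_l = ∏_{k ≠ l} (X - x_k)`, so that `ℓ_l = w_l ω_l` with `w_l = ω_l(x_l)⁻¹`, and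
`(X - x_i) ω_i = (X - x_j) ω_j` is the full nodal polynomial. Differentiating this identity
`m` times by Leibniz and evaluating at `x_i` gives
`(x_i - x_j) ω_j^{(m)}(x_i) = m (ω_i^{(m-1)}(x_i) - ω_j^{(m-1)}(x_i))`.
The case `m = 1` reads `(x_i - x_j) ω_j'(x_i) = ω_i(x_i)`, which expresses `c^{(1)}_{ij}`
through `w_i / w_j`; rescaling by the weights turns the general case into Shu's recurrence.
-/

open Polynomial Finset

/-- The `j`-th Lagrange basis polynomial `ℓ_j(X) = ∏_{k ≠ j} (X - x_k) / (x_j - x_k)`. -/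
noncomputable def lagrangeBasis {N : ℕ} (x : Fin N → ℝ) (j : Fin N) : Polynomial ℝ :=
  ∏ k ∈ Finset.univ.erase j, Polynomial.C ((x j - x k)⁻¹) * (Polynomial.X - Polynomial.C (x k))

/-- The `m`-th order GDQ weighting coefficient `c^{(m)}_{ij} = ℓ_j^{(m)}(x_i)`. -/
noncomputable def gdqC {N : ℕ} (x : Fin N → ℝ) (m : ℕ) (i j : Fin N) : ℝ :=
  (Polynomial.derivative^[m] (lagrangeBasis x j)).eval (x i)

open Lagrange

namespace Polynomial

variable {R : Type*} [CommRing R]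

theorem iterate_derivative_X_sub_C_mul (a : R) (p : R[X]) (n : ℕ) :
    derivative^[n + 1] ((X - C a) * p) =
      (X - C a) * derivative^[n + 1] p + (n + 1 : R[X]) * derivative^[n] p := by
  induction n with
  | zero =>
    simp only [zero_add, Function.iterate_one, derivative_mul, derivative_sub, derivative_X,
      derivative_C, sub_zero, one_mul, Nat.cast_zero, Function.iterate_zero, id_eq]
    ring
  | succ n ih =>
    rw [Function.iterate_succ_apply', ih, derivative_add, derivative_mul, derivative_mul,
      ← Function.iterate_succ_apply' derivative (n + 1), ← Function.iterate_succ_apply' derivative n]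
    simp only [derivative_sub, derivative_X, derivative_C, derivative_add, derivative_natCast,
      derivative_one, sub_zero, add_zero, one_mul, zero_mul, zero_add]
    push_cast
    ring

theorem sub_mul_eval_iterate_derivative_of_X_sub_C_mul_eq {a b : R} {p q : R[X]}
    (h : (X - C a) * p = (X - C b) * q) (n : ℕ) :
    (a - b) * eval a (derivative^[n + 1] q) =
      (n + 1) * (eval a (derivative^[n] p) - eval a (derivative^[n] q)) := by
  have := congrArg (eval a ∘ derivative^[n + 1]) h
  simp only [Function.comp_apply, iterate_derivative_X_sub_C_mul, eval_add, eval_mul, eval_sub,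
    eval_X, eval_C, sub_self, zero_mul, zero_add, eval_natCast, eval_one] at this
  linear_combination -this

end Polynomial

theorem Lagrange.nodalWeight_mul_eval_nodal_erase {F ι : Type*} [Field F] [DecidableEq ι]
    {s : Finset ι} {v : ι → F} (hvs : Set.InjOn v s) {i : ι} (hi : i ∈ s) :
    nodalWeight s v i * eval (v i) (nodal (s.erase i) v) = 1 := by
  rw [nodalWeight_eq_eval_nodal_erase_inv]
  refine inv_mul_cancel₀ (eval_nodal_not_at_node fun k hk => ?_)
  exact fun h => (mem_erase.mp hk).1 (hvs (mem_of_mem_erase hk) hi h.symm)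

section NodalForm

variable {N : ℕ} (x : Fin N → ℝ)

theorem lagrangeBasis_eq_C_nodalWeight_mul_nodal_erase (j : Fin N) :
    lagrangeBasis x j = C (nodalWeight univ x j) * nodal (univ.erase j) x := by
  simp only [lagrangeBasis, nodalWeight, nodal, prod_mul_distrib, map_prod]

theorem gdqC_eq_nodalWeight_mul (m : ℕ) (i j : Fin N) :
    gdqC x m i j = nodalWeight univ x j * eval (x i) (derivative^[m] (nodal (univ.erase j) x)) := by
  rw [gdqC, lagrangeBasis_eq_C_nodalWeight_mul_nodal_erase, iterate_derivative_C_mul, eval_mul,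
    eval_C]

end NodalForm

theorem stmt_2_general {N : ℕ} (x : Fin N → ℝ) (hx : Function.Injective x)
    (m : ℕ) (hm : 2 ≤ m) (i j : Fin N) (hij : i ≠ j) :
    gdqC x m i j =
      (m : ℝ) * (gdqC x (m - 1) i i * gdqC x 1 i j - gdqC x (m - 1) i j / (x i - x j)) := by
  obtain ⟨n, rfl⟩ : ∃ n, m = n + 1 := ⟨m - 1, by omega⟩
  simp only [gdqC_eq_nodalWeight_mul, Nat.add_sub_cancel, Function.iterate_one]
  set p := nodal (univ.erase i) x
  set q := nodal (univ.erase j) x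
  have hpq : (X - C (x i)) * p = (X - C (x j)) * q := by
    rw [← nodal_eq_mul_nodal_erase (mem_univ i), ← nodal_eq_mul_nodal_erase (mem_univ j)]
  have hq : eval (x i) q = 0 := eval_nodal_at_node (mem_erase.mpr ⟨hij, mem_univ i⟩)
  have hfirst : (x i - x j) * eval (x i) (derivative q) = eval (x i) p := by
    simpa [hq] using sub_mul_eval_iterate_derivative_of_X_sub_C_mul_eq hpq 0
  have hdiff := sub_mul_eval_iterate_derivative_of_X_sub_C_mul_eq hpq n
  have hweight : nodalWeight univ x i * eval (x i) p = 1 := nodalWeight_mul_eval_nodal_erase hx.injOn (mem_univ i)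
  have hsub : x i - x j ≠ 0 := sub_ne_zero.mpr (hx.ne hij)
  push_cast
  field_simp
  linear_combination nodalWeight univ x j * hdiff - nodalWeight univ x j * (n + 1) *
    eval (x i) (derivative^[n] p) * (nodalWeight univ x i * hfirst + hweight)

/-- Shu's recurrence: for `2 ≤ m ≤ N − 1` and `i ≠ j`,
`c^{(m)}_{ij} = m (c^{(m−1)}_{ii} c^{(1)}_{ij} − c^{(m−1)}_{ij} / (x_i − x_j))`. -/
theorem stmt_2 {N : ℕ} (hN : 3 ≤ N) (x : Fin N → ℝ) (hx : Function.Injective x)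
    (m : ℕ) (hm : 2 ≤ m) (hm' : m ≤ N - 1) (i j : Fin N) (hij : i ≠ j) :
    gdqC x m i j =
      (m : ℝ) * (gdqC x (m - 1) i i * gdqC x 1 i j - gdqC x (m - 1) i j / (x i - x j)) :=
  stmt_2_general x hx m hm i j hij
end

section
/- Let L > 0, β > 0, R ≥ 0, and let U : ℝ → ℝ be four times differentiable, not identically zero on [0, L], satisfying U⁗(x) = β⁴·U(x) for all x, the clamped conditions U(0) = 0 and U′(0) = 0, the zero-moment condition U″(L) = 0, and the end-mass shear condition U‴(L) = −R·L·β⁴·U(L). Then the frequency equation 1 + cos(βL)·cosh(βL) = R·βL·( sin(βL)·cosh(βL) − cos(βL)·sinh(βL) ) holds. -/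
/-!
Lagrange's identity: for two solutions `u`, `v` of `y⁗ = β⁴ y` the bilinear form
`u v‴ - u′ v″ + u″ v′ - u‴ v` is constant. Pairing `U` with the translate of the solution whose
Cauchy data at `0` is `(0, 0, 0, 1)` reads off `U(x)` from the Cauchy data of `U` at `0`, so every
solution is a combination of Krylov's functions. With `U(0) = U′(0) = 0` this gives
`U = a K₃ + b K₄` with `(a, b) = (U″(0), U‴(0)) ≠ 0`, and the two conditions at `x = L` form a
homogeneous `2 × 2` system in `(a, b)`, whose determinant must vanish; by `cosh² - sinh² = 1` and
`sin² + cos² = 1` that determinant is half the difference of the two sides of the frequency equation.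
-/

open Real

def IsFourthOrderChain (c : ℝ) (u₀ u₁ u₂ u₃ : ℝ → ℝ) : Prop :=
  ∀ x, HasDerivAt u₀ (u₁ x) x ∧ HasDerivAt u₁ (u₂ x) x ∧ HasDerivAt u₂ (u₃ x) x ∧
    HasDerivAt u₃ (c * u₀ x) x

namespace IsFourthOrderChain

variable {c : ℝ} {u₀ u₁ u₂ u₃ v₀ v₁ v₂ v₃ : ℝ → ℝ}

theorem rotate (hu : IsFourthOrderChain c u₀ u₁ u₂ u₃) :
    IsFourthOrderChain c u₁ u₂ u₃ (fun x => c * u₀ x) := fun x =>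
  ⟨(hu x).2.1, (hu x).2.2.1, (hu x).2.2.2, ((hu x).1.const_mul c)⟩

theorem comp_sub_const (hu : IsFourthOrderChain c u₀ u₁ u₂ u₃) (a : ℝ) :
    IsFourthOrderChain c (fun x => u₀ (x - a)) (fun x => u₁ (x - a)) (fun x => u₂ (x - a))
      (fun x => u₃ (x - a)) := fun x =>
  ⟨(hu _).1.comp_sub_const x a, (hu _).2.1.comp_sub_const x a,
    (hu _).2.2.1.comp_sub_const x a, (hu _).2.2.2.comp_sub_const x a⟩

theorem lagrange_identity (hu : IsFourthOrderChain c u₀ u₁ u₂ u₃)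
    (hv : IsFourthOrderChain c v₀ v₁ v₂ v₃) (s t : ℝ) :
    u₀ s * v₃ s - u₁ s * v₂ s + u₂ s * v₁ s - u₃ s * v₀ s =
      u₀ t * v₃ t - u₁ t * v₂ t + u₂ t * v₁ t - u₃ t * v₀ t := by
  have hderiv : ∀ x, HasDerivAt (fun x => u₀ x * v₃ x - u₁ x * v₂ x + u₂ x * v₁ x - u₃ x * v₀ x)
      0 x := by
    intro x
    obtain ⟨hu₀, hu₁, hu₂, hu₃⟩ := hu x
    obtain ⟨hv₀, hv₁, hv₂, hv₃⟩ := hv x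
    exact (((hu₀.mul hv₃).sub (hu₁.mul hv₂)).add (hu₂.mul hv₁) |>.sub (hu₃.mul hv₀)).congr_deriv
      (by ring)
  exact is_const_of_deriv_eq_zero (fun x => (hderiv x).differentiableAt)
    (fun x => (hderiv x).deriv) s t

end IsFourthOrderChain

theorem isFourthOrderChain_iterate_deriv {c : ℝ} {U : ℝ → ℝ}
    (hU : ∀ k ≤ 3, Differentiable ℝ (deriv^[k] U)) (hODE : ∀ x, deriv^[4] U x = c * U x) :
    IsFourthOrderChain c U (deriv U) (deriv^[2] U) (deriv^[3] U) := fun x =>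
  ⟨(hU 0 (by norm_num) x).hasDerivAt, (hU 1 (by norm_num) x).hasDerivAt,
    (hU 2 (by norm_num) x).hasDerivAt, hODE x ▸ (hU 3 le_rfl x).hasDerivAt⟩

/-! Krylov's functions: `krylov₁ β, …, krylov₄ β` solve `y⁗ = β⁴ y` with Cauchy data at `0`
the standard basis vectors of `ℝ⁴`. -/

noncomputable def krylov₁ (β t : ℝ) : ℝ := (cosh (β * t) + cos (β * t)) / 2

noncomputable def krylov₂ (β t : ℝ) : ℝ := (sinh (β * t) + sin (β * t)) / (2 * β)

noncomputable def krylov₃ (β t : ℝ) : ℝ := (cosh (β * t) - cos (β * t)) / (2 * β ^ 2)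

noncomputable def krylov₄ (β t : ℝ) : ℝ := (sinh (β * t) - sin (β * t)) / (2 * β ^ 3)

theorem isFourthOrderChain_krylov {β : ℝ} (hβ : β ≠ 0) :
    IsFourthOrderChain (β ^ 4) (krylov₄ β) (krylov₃ β) (krylov₂ β) (krylov₁ β) := by
  intro x
  have hlin : HasDerivAt (fun t => β * t) β x := by
    simpa using (hasDerivAt_id x).const_mul β
  refine ⟨?_, ?_, ?_, ?_⟩
  · exact ((hlin.sinh.sub hlin.sin).div_const _).congr_deriv (by unfold krylov₃; field_simp)
  · exact ((hlin.cosh.sub hlin.cos).div_const _).congr_deriv (by unfold krylov₂; field_simp; ring)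
  · exact ((hlin.sinh.add hlin.sin).div_const _).congr_deriv (by unfold krylov₁; field_simp)
  · exact ((hlin.cosh.add hlin.cos).div_const _).congr_deriv (by unfold krylov₄; field_simp; ring)

theorem IsFourthOrderChain.eq_krylov {β : ℝ} (hβ : β ≠ 0) {u₀ u₁ u₂ u₃ : ℝ → ℝ}
    (hu : IsFourthOrderChain (β ^ 4) u₀ u₁ u₂ u₃) (x : ℝ) :
    u₀ x = u₀ 0 * krylov₁ β x + u₁ 0 * krylov₂ β x + u₂ 0 * krylov₃ β x +
      u₃ 0 * krylov₄ β x := by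
  have h := hu.lagrange_identity ((isFourthOrderChain_krylov hβ).comp_sub_const x) x 0
  simp only [sub_self, zero_sub, krylov₁, krylov₂, krylov₃, krylov₄, mul_zero, mul_neg,
    cosh_zero, cos_zero, sinh_zero, sin_zero, cosh_neg, cos_neg, sinh_neg, sin_neg] at h ⊢
  linear_combination h

theorem det_eq_zero_of_mul_add_mul_eq_zero {p q r s a b : ℝ} (h₁ : a * p + b * q = 0)
    (h₂ : a * r + b * s = 0) (hab : a ≠ 0 ∨ b ≠ 0) : p * s - q * r = 0 := by
  rcases hab with ha | hb
  · have h : (p * s - q * r) * a = 0 := by linear_combination s * h₁ - q * h₂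
    exact (mul_eq_zero.1 h).resolve_right ha
  · have h : (p * s - q * r) * b = 0 := by linear_combination p * h₂ - r * h₁
    exact (mul_eq_zero.1 h).resolve_right hb

theorem two_mul_krylov₁_sq_sub_mul {β : ℝ} (hβ : β ≠ 0) (t : ℝ) :
    2 * (krylov₁ β t ^ 2 - β ^ 4 * (krylov₂ β t * krylov₄ β t)) =
      1 + cos (β * t) * cosh (β * t) := by
  simp only [krylov₁, krylov₂, krylov₄]
  field_simp
  linear_combination cosh_sq_sub_sinh_sq (β * t) + sin_sq_add_cos_sq (β * t)

theorem two_mul_pow_three_mul_krylov_mul_sub_mul {β : ℝ} (hβ : β ≠ 0) (t : ℝ) :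
    2 * β ^ 3 * (krylov₁ β t * krylov₄ β t - krylov₂ β t * krylov₃ β t) =
      -(sin (β * t) * cosh (β * t) - cos (β * t) * sinh (β * t)) := by
  simp only [krylov₁, krylov₂, krylov₃, krylov₄]
  field_simp
  ring

theorem stmt_12_general (L β R : ℝ) (hβ : 0 < β)
    (U : ℝ → ℝ) (hU : ∀ k ≤ 3, Differentiable ℝ (deriv^[k] U))
    (hODE : ∀ x, deriv^[4] U x = β ^ 4 * U x)
    (hc0 : U 0 = 0) (hc1 : deriv U 0 = 0)
    (hM : deriv^[2] U L = 0) (hV : deriv^[3] U L = -R * L * β ^ 4 * U L)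
    (hnontriv : ∃ x ∈ Set.Icc (0 : ℝ) L, U x ≠ 0) :
    1 + Real.cos (β * L) * Real.cosh (β * L) =
      R * (β * L) *
        (Real.sin (β * L) * Real.cosh (β * L) - Real.cos (β * L) * Real.sinh (β * L)) := by
  have hchain := isFourthOrderChain_iterate_deriv hU hODE
  have hrepr : ∀ x, U x = deriv^[2] U 0 * krylov₃ β x + deriv^[3] U 0 * krylov₄ β x := by
    intro x
    simpa only [hc0, hc1, zero_mul, zero_add] using hchain.eq_krylov hβ.ne' x
  have hab : deriv^[2] U 0 ≠ 0 ∨ deriv^[3] U 0 ≠ 0 := by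
    obtain ⟨x, -, hx⟩ := hnontriv
    by_contra! hab
    exact hx (by rw [hrepr, hab.1, hab.2]; ring)
  have hML := hchain.rotate.rotate.eq_krylov hβ.ne' L
  have hVL := hchain.rotate.rotate.rotate.eq_krylov hβ.ne' L
  simp only [hc0, hc1, mul_zero, zero_mul, add_zero] at hML hVL
  have hshear : deriv^[2] U 0 * (β ^ 4 * krylov₄ β L + R * L * β ^ 4 * krylov₃ β L) +
      deriv^[3] U 0 * (krylov₁ β L + R * L * β ^ 4 * krylov₄ β L) = 0 := by
    linear_combination hVL.symm.trans hV - R * L * β ^ 4 * hrepr L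
  have hdet := det_eq_zero_of_mul_add_mul_eq_zero (hML.symm.trans hM) hshear hab
  linear_combination 2 * hdet - two_mul_krylov₁_sq_sub_mul hβ.ne' L -
    R * L * β * two_mul_pow_three_mul_krylov_mul_sub_mul hβ.ne' L

/-- Frequency equation of a clamped–free beam with a concentrated end mass (mass ratio
`R ≥ 0`): a nontrivial mode `U` with `U⁗ = β⁴ U`, `U(0) = U′(0) = 0`, `U″(L) = 0` and
`U‴(L) = −R L β⁴ U(L)` forces
`1 + cos(βL) cosh(βL) = R βL (sin(βL) cosh(βL) − cos(βL) sinh(βL))`. -/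
theorem stmt_12 (L β R : ℝ) (hL : 0 < L) (hβ : 0 < β) (hR : 0 ≤ R)
    (U : ℝ → ℝ) (hU : ∀ k ≤ 3, Differentiable ℝ (deriv^[k] U))
    (hODE : ∀ x, deriv^[4] U x = β ^ 4 * U x)
    (hc0 : U 0 = 0) (hc1 : deriv U 0 = 0)
    (hM : deriv^[2] U L = 0) (hV : deriv^[3] U L = -R * L * β ^ 4 * U L)
    (hnontriv : ∃ x ∈ Set.Icc (0 : ℝ) L, U x ≠ 0) :
    1 + Real.cos (β * L) * Real.cosh (β * L) =
      R * (β * L) *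
        (Real.sin (β * L) * Real.cosh (β * L) - Real.cos (β * L) * Real.sinh (β * L)) :=
  stmt_12_general L β R hβ U hU hODE hc0 hc1 hM hV hnontriv
end

section
/- Let N ≥ 3, let x_1, …, x_N be pairwise distinct real numbers, let ℓ_j be the Lagrange basis polynomials, and write c^{(m)}_{ij} = ℓ_j^{(m)}(x_i). Then for all indices i ≠ j, the second-order weighting coefficient satisfies c^{(2)}_{ij} = 2·c^{(1)}_{ij}·( c^{(1)}_{ii} − 1/(x_i − x_j) ). -/
open Polynomial Finset

lemma lb_key {N : ℕ} (x : Fin N → ℝ) (j : Fin N) :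
    lagrangeBasis x j * (X - C (x j)) =
      C (∏ k ∈ Finset.univ.erase j, (x j - x k)⁻¹) * ∏ k ∈ Finset.univ, (X - C (x k)) := by
  unfold lagrangeBasis
  rw [Finset.prod_mul_distrib, ← map_prod, mul_assoc,
    Finset.prod_erase_mul _ _ (Finset.mem_univ j)]

lemma lb_eval_self {N : ℕ} (x : Fin N → ℝ) (hx : Function.Injective x) (i : Fin N) :
    (lagrangeBasis x i).eval (x i) = 1 := by
  unfold lagrangeBasis
  rw [eval_prod]
  apply Finset.prod_eq_one
  intro k hk
  have hk' : x i - x k ≠ 0 := sub_ne_zero.2 fun h => (Finset.mem_erase.1 hk).1 (hx h).symm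
  simp [inv_mul_cancel₀ hk']

lemma lb_eval_other {N : ℕ} (x : Fin N → ℝ) (i j : Fin N) (hij : i ≠ j) :
    (lagrangeBasis x j).eval (x i) = 0 := by
  unfold lagrangeBasis
  rw [eval_prod]
  apply Finset.prod_eq_zero (Finset.mem_erase.2 ⟨hij, Finset.mem_univ i⟩)
  simp

/-- Case `m = 2` of the Shu recurrence: for `i ≠ j`,
`c^{(2)}_{ij} = 2 c^{(1)}_{ij} (c^{(1)}_{ii} − 1/(x_i − x_j))`. -/
theorem stmt_16 {N : ℕ} (hN : 3 ≤ N) (x : Fin N → ℝ) (hx : Function.Injective x)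
    (i j : Fin N) (hij : i ≠ j) :
    gdqC x 2 i j = 2 * gdqC x 1 i j * (gdqC x 1 i i - 1 / (x i - x j)) := by
  set Ci : ℝ := ∏ k ∈ Finset.univ.erase i, (x i - x k)⁻¹ with hCi
  set Cj : ℝ := ∏ k ∈ Finset.univ.erase j, (x j - x k)⁻¹ with hCj
  have hCi0 : Ci ≠ 0 := by
    rw [hCi]
    apply Finset.prod_ne_zero_iff.2
    intro k hk
    exact inv_ne_zero (sub_ne_zero.2 fun h => (Finset.mem_erase.1 hk).1 (hx h).symm)
  have hxij : x i - x j ≠ 0 := sub_ne_zero.2 fun h => hij (hx h)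
  have H : C Ci * (lagrangeBasis x j * (X - C (x j)))
      = C Cj * (lagrangeBasis x i * (X - C (x i))) := by
    rw [lb_key, lb_key]; ring
  have H1 := congrArg derivative H
  simp only [derivative_C_mul, derivative_mul, derivative_X_sub_C, mul_one,
    derivative_C, zero_mul, zero_add, mul_zero, add_zero] at H1
  have H2 := congrArg derivative H1
  simp only [derivative_add, derivative_C_mul, derivative_mul, derivative_X_sub_C,
    mul_one, derivative_C, zero_mul, zero_add, mul_zero, add_zero] at H2
  have E1 := congrArg (eval (x i)) H1
  have E2 := congrArg (eval (x i)) H2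
  simp only [eval_mul, eval_add, eval_sub, eval_C, eval_X, eval_one,
    lb_eval_self x hx, lb_eval_other x i j hij, sub_self, mul_zero, zero_mul,
    mul_one, add_zero, zero_add] at E1 E2
  have hA : gdqC x 1 i j = (derivative (lagrangeBasis x j)).eval (x i) := by
    simp [gdqC]
  have hB : gdqC x 1 i i = (derivative (lagrangeBasis x i)).eval (x i) := by
    simp [gdqC]
  have hD : gdqC x 2 i j
      = (derivative (derivative (lagrangeBasis x j))).eval (x i) := by
    simp [gdqC, Function.iterate_succ, Function.comp]
  rw [hA, hB, hD]
  set A := (derivative (lagrangeBasis x j)).eval (x i)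
  set B := (derivative (lagrangeBasis x i)).eval (x i)
  set D := (derivative (derivative (lagrangeBasis x j))).eval (x i)
  rw [← E1] at E2
  have E4 : D * (x i - x j) + A + A = A * (x i - x j) * (B + B) := by
    apply mul_left_cancel₀ hCi0
    linear_combination E2
  field_simp
  linear_combination E4
end
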